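/- arXiv:1611.07102 — 2 statements merged into one kernel-verified Lean document; each statement's English description precedes it below -/
import Mathlib

section
/- Downwards monotonicity: Let F be a consular election rule satisfying SPP and SPO, let F(P) = {a, b}, and let P_i' be a ballot obtained from voter i's ballot P_i by moving an alternative s down (i.e., all pairs of alternatives other than s are ordered the same in P_i' as in P_i, and every alternative ranked above s in P_i is still ranked above s in P_i'). If s ∉ {a, b}, then F(P_i'P_{-i}) = F(P). If s ∈ {a, b}, say s = a, then either F(P_i'P_{-i}) = F(P), or F(P_i'P_{-i}) = {c, b} for some c ≠ s; moreover the latter case can occur only if s drops below c (i.e., s ≻_i c but c ≻_i' s). -/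
open Function

/-- A ballot is a strict linear order on the set of alternatives. -/
abbrev Ballot (A : Type*) := LinearOrder A

/-- A profile assigns a ballot to each voter. -/
abbrev Profile (V A : Type*) := V → Ballot A

variable {V A : Type*}

/-- The best (greatest) element of `W` under ballot `L` (junk value if `W` is empty). -/
noncomputable def bestIn [Nonempty A] (L : Ballot A) (W : Finset A) : A :=
  if h : W.Nonempty then @Finset.max' A L W h else Classical.arbitrary A

/-- The worst (least) element of `W` under ballot `L` (junk value if `W` is empty). -/
noncomputable def worstIn [Nonempty A] (L : Ballot A) (W : Finset A) : A :=
  if h : W.Nonempty then @Finset.min' A L W h else Classical.arbitrary A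

/-- Strategy-proofness for optimists. -/
def SPO [DecidableEq V] [Nonempty A] (F : Profile V A → Finset A) : Prop :=
  ∀ (P : Profile V A) (i : V) (Pi' : Ballot A),
    (P i).le (bestIn (P i) (F (Function.update P i Pi'))) (bestIn (P i) (F P))

/-- Strategy-proofness for pessimists. -/
def SPP [DecidableEq V] [Nonempty A] (F : Profile V A → Finset A) : Prop :=
  ∀ (P : Profile V A) (i : V) (Pi' : Ballot A),
    (P i).le (worstIn (P i) (F (Function.update P i Pi'))) (worstIn (P i) (F P))

/-- `F` is weakly viable if every alternative is on some winning committee. -/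
def WeaklyViable (F : Profile V A → Finset A) : Prop :=
  ∀ a : A, ∃ P : Profile V A, a ∈ F P

/-- `F` is Marian if some alternative is on every winning committee. -/
def Marian (F : Profile V A → Finset A) : Prop :=
  ∃ m : A, ∀ P : Profile V A, m ∈ F P

/-- restriction of a ballot to a subset of alternatives -/
def restrictBallot (L : Ballot A) (B : Finset A) : Ballot {x // x ∈ B} :=
  @LinearOrder.lift' _ A L (fun x => (x : A)) Subtype.val_injective

/-- A consular rule is reducible if it is the disjoint union of two social choice functions. -/
def Reducible [Fintype A] [DecidableEq A] (F : Profile V A → Finset A) : Prop :=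
  ∃ B C : Finset A, B.Nonempty ∧ C.Nonempty ∧ Disjoint B C ∧ B ∪ C = Finset.univ ∧
    ∃ (G : Profile V {x // x ∈ B} → {x // x ∈ B}) (H : Profile V {x // x ∈ C} → {x // x ∈ C}),
      ∀ P : Profile V A,
        F P = {((G (fun i => restrictBallot (P i) B)) : A), ((H (fun i => restrictBallot (P i) C)) : A)}

/-- The range graph of a consular election rule. -/
def rangeGraph [DecidableEq A] (F : Profile V A → Finset A) : SimpleGraph A where
  Adj a b := a ≠ b ∧ ∃ P : Profile V A, F P = {a, b}
  symm := by
    constructor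
    rintro a b ⟨hab, P, hP⟩
    exact ⟨hab.symm, P, by rwa [Finset.pair_comm]⟩
  loopless := by constructor; rintro a ⟨h, -⟩; exact h rfl

/-- `t` is ranked immediately above `s` in ballot `L`. -/
def JustAbove (L : Ballot A) (s t : A) : Prop :=
  L.lt s t ∧ ∀ z, ¬ (L.lt s z ∧ L.lt z t)

/-- The ballot obtained from `L` by transposing the alternatives `s` and `t`. -/
def swapBallot [DecidableEq A] (L : Ballot A) (s t : A) : Ballot A :=
  @LinearOrder.lift' A A L (Equiv.swap s t) (Equiv.injective _)

/-- `L'` is obtained from `L` by moving `s` up. -/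
def MovedUp (L L' : Ballot A) (s : A) : Prop :=
  (∀ x y, x ≠ s → y ≠ s → (L'.lt x y ↔ L.lt x y)) ∧ ∀ x, L.lt x s → L'.lt x s

/-- `L'` is obtained from `L` by moving `s` down. -/
def MovedDown (L L' : Ballot A) (s : A) : Prop :=
  (∀ x y, x ≠ s → y ≠ s → (L'.lt x y ↔ L.lt x y)) ∧ ∀ x, L.lt s x → L'.lt s x

/-- Strategy-proofness of a single-winner social choice function. -/
def SCFStrategyProof {B : Type*} [DecidableEq V] (G : Profile V B → B) : Prop :=
  ∀ (Q : Profile V B) (i : V) (Qi' : Ballot B),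
    (Q i).le (G (Function.update Q i Qi')) (G Q)

/-- Edge-connectivity of a graph. -/
def EdgeConnectivity {X : Type*} (G : SimpleGraph X) : Prop :=
  ∀ a b c d : X, G.Adj a b → G.Adj c d → a ≠ c → a ≠ d → b ≠ c → b ≠ d →
    (G.Adj a c ∨ G.Adj a d) ∧ (G.Adj b c ∨ G.Adj b d)


section AuxBest

variable {A : Type*} [Nonempty A]

lemma bestIn_mem (L : Ballot A) {W : Finset A} (h : W.Nonempty) : bestIn L W ∈ W := by
  rw [bestIn, dif_pos h]; exact @Finset.max'_mem A L W h

lemma le_bestIn (L : Ballot A) {W : Finset A} {x : A} (hx : x ∈ W) : L.le x (bestIn L W) := by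
  rw [bestIn, dif_pos ⟨x, hx⟩]; exact @Finset.le_max' A L W x hx

lemma worstIn_mem (L : Ballot A) {W : Finset A} (h : W.Nonempty) : worstIn L W ∈ W := by
  rw [worstIn, dif_pos h]; exact @Finset.min'_mem A L W h

lemma worstIn_le (L : Ballot A) {W : Finset A} {x : A} (hx : x ∈ W) : L.le (worstIn L W) x := by
  rw [worstIn, dif_pos ⟨x, hx⟩]; exact @Finset.min'_le A L W x hx

variable [DecidableEq A]

lemma H1of (L : Ballot A) {a b x y : A}
    (h : L.le (bestIn L ({x, y} : Finset A)) (bestIn L ({a, b} : Finset A))) :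
    (L.le x a ∨ L.le x b) ∧ (L.le y a ∨ L.le y b) := by
  have hm := bestIn_mem L (W := ({a, b} : Finset A)) ⟨a, by simp⟩
  simp only [Finset.mem_insert, Finset.mem_singleton] at hm
  have hx : L.le x (bestIn L ({x, y} : Finset A)) := le_bestIn L (by simp)
  have hy : L.le y (bestIn L ({x, y} : Finset A)) := le_bestIn L (by simp)
  have tx := L.le_trans _ _ _ hx h
  have ty := L.le_trans _ _ _ hy h
  rcases hm with hm | hm <;> rw [hm] at tx ty
  · exact ⟨Or.inl tx, Or.inl ty⟩
  · exact ⟨Or.inr tx, Or.inr ty⟩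

lemma H2of (L : Ballot A) {a b x y : A}
    (h : L.le (worstIn L ({x, y} : Finset A)) (worstIn L ({a, b} : Finset A))) :
    (L.le x a ∧ L.le x b) ∨ (L.le y a ∧ L.le y b) := by
  have hm := worstIn_mem L (W := ({x, y} : Finset A)) ⟨x, by simp⟩
  simp only [Finset.mem_insert, Finset.mem_singleton] at hm
  have ha := L.le_trans _ _ _ h (worstIn_le L (show a ∈ ({a, b} : Finset A) by simp))
  have hb := L.le_trans _ _ _ h (worstIn_le L (show b ∈ ({a, b} : Finset A) by simp))
  rcases hm with hm | hm <;> rw [hm] at ha hb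
  · exact Or.inl ⟨ha, hb⟩
  · exact Or.inr ⟨ha, hb⟩

lemma H3of (M : Ballot A) {a b x y : A}
    (h : M.le (bestIn M ({a, b} : Finset A)) (bestIn M ({x, y} : Finset A))) :
    (M.le a x ∧ M.le b x) ∨ (M.le a y ∧ M.le b y) := by
  have hm := bestIn_mem M (W := ({x, y} : Finset A)) ⟨x, by simp⟩
  simp only [Finset.mem_insert, Finset.mem_singleton] at hm
  have ha := M.le_trans _ _ _ (le_bestIn M (show a ∈ ({a, b} : Finset A) by simp)) h
  have hb := M.le_trans _ _ _ (le_bestIn M (show b ∈ ({a, b} : Finset A) by simp)) h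
  rcases hm with hm | hm <;> rw [hm] at ha hb
  · exact Or.inl ⟨ha, hb⟩
  · exact Or.inr ⟨ha, hb⟩

lemma H4of (M : Ballot A) {a b x y : A}
    (h : M.le (worstIn M ({a, b} : Finset A)) (worstIn M ({x, y} : Finset A))) :
    (M.le a x ∨ M.le b x) ∧ (M.le a y ∨ M.le b y) := by
  have hm := worstIn_mem M (W := ({a, b} : Finset A)) ⟨a, by simp⟩
  simp only [Finset.mem_insert, Finset.mem_singleton] at hm
  have hx := M.le_trans _ _ _ h (worstIn_le M (show x ∈ ({x, y} : Finset A) by simp))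
  have hy := M.le_trans _ _ _ h (worstIn_le M (show y ∈ ({x, y} : Finset A) by simp))
  rcases hm with hm | hm <;> rw [hm] at hx hy
  · exact ⟨Or.inl hx, Or.inl hy⟩
  · exact ⟨Or.inr hx, Or.inr hy⟩

end AuxBest
section AuxSwap

variable {A : Type*} [DecidableEq A] {L : Ballot A} {s t : A}

lemma swapBallot_le (u v : A) :
    (swapBallot L s t).le u v ↔ L.le (Equiv.swap s t u) (Equiv.swap s t v) := Iff.rfl

variable (hts : L.lt t s) (hadj : ∀ z, ¬ (L.lt t z ∧ L.lt z s))
include hts hadj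

/-- transfer: for u v ≠ s, the swapped order agrees with L. -/
lemma swap_le_iff {u v : A} (hu : u ≠ s) (hv : v ≠ s) :
    (swapBallot L s t).le u v ↔ L.le u v := by
  letI := L
  rw [swapBallot_le]
  rcases eq_or_ne u t with hut | hut
  · rcases eq_or_ne v t with hvt | hvt
    · rw [hut, hvt]; simp
    · rw [hut, Equiv.swap_apply_right, Equiv.swap_apply_of_ne_of_ne hv hvt]
      show s ≤ v ↔ t ≤ v
      constructor
      · intro h; exact le_of_lt (lt_of_lt_of_le hts h)
      · intro h
        rcases le_or_gt s v with h' | h'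
        · exact h'
        · exact absurd ⟨lt_of_le_of_ne h (Ne.symm hvt), h'⟩ (hadj v)
  · rcases eq_or_ne v t with hvt | hvt
    · rw [hvt, Equiv.swap_apply_right, Equiv.swap_apply_of_ne_of_ne hu hut]
      show u ≤ s ↔ u ≤ t
      constructor
      · intro h
        rcases le_or_gt u t with h' | h'
        · exact h'
        · exact absurd ⟨h', lt_of_le_of_ne h hu⟩ (hadj u)
      · intro h; exact le_of_lt (lt_of_le_of_lt h hts)
    · rw [Equiv.swap_apply_of_ne_of_ne hu hut, Equiv.swap_apply_of_ne_of_ne hv hvt]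

lemma swap_lt_iff {u v : A} (hu : u ≠ s) (hv : v ≠ s) :
    (swapBallot L s t).lt u v ↔ L.lt u v := by
  rw [(swapBallot L s t).lt_iff_le_not_ge, L.lt_iff_le_not_ge,
    swap_le_iff hts hadj hu hv, swap_le_iff hts hadj hv hu]

lemma swap_s_le_iff {u : A} (hu : u ≠ s) :
    (swapBallot L s t).le s u ↔ L.le t u := by
  letI := L
  rw [swapBallot_le, Equiv.swap_apply_left]
  rcases eq_or_ne u t with hut | hut
  · rw [hut, Equiv.swap_apply_right]
    show t ≤ s ↔ t ≤ t
    simp [le_of_lt hts]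
  · rw [Equiv.swap_apply_of_ne_of_ne hu hut]

lemma swap_le_s_iff {u : A} (hu : u ≠ s) :
    (swapBallot L s t).le u s ↔ L.lt u t := by
  letI := L
  rw [swapBallot_le, Equiv.swap_apply_left]
  rcases eq_or_ne u t with hut | hut
  · rw [hut, Equiv.swap_apply_right]
    show s ≤ t ↔ t < t
    simp [not_le.2 hts]
  · rw [Equiv.swap_apply_of_ne_of_ne hu hut]
    show u ≤ t ↔ u < t
    exact ⟨fun h => lt_of_le_of_ne h hut, le_of_lt⟩

lemma swap_s_lt_iff {u : A} (hu : u ≠ s) :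
    (swapBallot L s t).lt s u ↔ L.le t u := by
  letI := L
  rw [(swapBallot L s t).lt_iff_le_not_ge, swap_s_le_iff hts hadj hu, swap_le_s_iff hts hadj hu]
  show t ≤ u ∧ ¬ u < t ↔ t ≤ u
  exact ⟨fun h => h.1, fun h => ⟨h, not_lt.2 h⟩⟩

lemma swap_lt_s_iff {u : A} (hu : u ≠ s) :
    (swapBallot L s t).lt u s ↔ L.lt u t := by
  letI := L
  rw [(swapBallot L s t).lt_iff_le_not_ge, swap_le_s_iff hts hadj hu, swap_s_le_iff hts hadj hu]
  show u < t ∧ ¬ t ≤ u ↔ u < t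
  exact ⟨fun h => h.1, fun h => ⟨h, not_le.2 h⟩⟩

end AuxSwap
section AuxKey

variable {A : Type*} [DecidableEq A]

lemma pair_minmax {α : Type*} [DecidableEq α] [LinearOrder α] (u v : α) :
    ({u, v} : Finset α) = {min u v, max u v} := by
  rcases le_total u v with h | h
  · rw [min_eq_left h, max_eq_right h]
  · rw [min_eq_right h, max_eq_left h, Finset.pair_comm]

lemma key_C1 (L : Ballot A) (a b x y : A)
    (H1 : (L.le x a ∨ L.le x b) ∧ (L.le y a ∨ L.le y b))
    (H2 : (L.le x a ∧ L.le x b) ∨ (L.le y a ∧ L.le y b))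
    (H3 : (L.le a x ∧ L.le b x) ∨ (L.le a y ∧ L.le b y))
    (H4 : (L.le a x ∨ L.le b x) ∧ (L.le a y ∨ L.le b y)) :
    ({x, y} : Finset A) = {a, b} := by
  letI := L
  have hx : x ≤ max a b := H1.1.elim le_max_of_le_left le_max_of_le_right
  have hy : y ≤ max a b := H1.2.elim le_max_of_le_left le_max_of_le_right
  have hmax : max x y = max a b := by
    refine le_antisymm (max_le hx hy) ?_
    rcases H3 with ⟨h1, h2⟩ | ⟨h1, h2⟩
    · exact le_trans (max_le h1 h2) (le_max_left x y)
    · exact le_trans (max_le h1 h2) (le_max_right x y)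
  have hmin : min x y = min a b := by
    refine le_antisymm ?_ (le_min (H4.1.elim min_le_of_left_le min_le_of_right_le)
      (H4.2.elim min_le_of_left_le min_le_of_right_le))
    rcases H2 with ⟨h1, h2⟩ | ⟨h1, h2⟩
    · exact le_trans (min_le_left x y) (le_min h1 h2)
    · exact le_trans (min_le_right x y) (le_min h1 h2)
  rw [pair_minmax x y, hmin, hmax, ← pair_minmax a b]

lemma key_C2 (L : Ballot A) (s t a b y : A) (hab : a ≠ b)
    (has : a ≠ s) (hbs : b ≠ s) (hys : y ≠ s)
    (hts : L.lt t s) (hadj : ∀ z, ¬ (L.lt t z ∧ L.lt z s))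
    (H1 : (L.le s a ∨ L.le s b) ∧ (L.le y a ∨ L.le y b))
    (H2 : (L.le s a ∧ L.le s b) ∨ (L.le y a ∧ L.le y b))
    (H3 : ((swapBallot L s t).le a s ∧ (swapBallot L s t).le b s) ∨
          ((swapBallot L s t).le a y ∧ (swapBallot L s t).le b y))
    (H4 : ((swapBallot L s t).le a s ∨ (swapBallot L s t).le b s) ∧
          ((swapBallot L s t).le a y ∨ (swapBallot L s t).le b y)) : False := by
  letI := L
  rw [swap_le_s_iff hts hadj has, swap_le_s_iff hts hadj hbs,
    swap_le_iff hts hadj has hys, swap_le_iff hts hadj hbs hys] at H3 H4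
  rcases le_or_gt t y with hty | hty
  · -- t ≤ y
    rcases H3 with ⟨ha, hb⟩ | ⟨ha, hb⟩
    · rcases H1.2 with h | h
      · exact absurd (lt_of_le_of_lt (le_trans hty h) ha) (lt_irrefl t)
      · exact absurd (lt_of_le_of_lt (le_trans hty h) hb) (lt_irrefl t)
    · rcases H2 with ⟨h1, h2⟩ | ⟨h1, h2⟩
      · rcases H4.1 with h' | h'
        · exact absurd (lt_of_le_of_lt h1 (lt_trans h' hts)) (lt_irrefl s)
        · exact absurd (lt_of_le_of_lt h2 (lt_trans h' hts)) (lt_irrefl s)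
      · exact hab (Eq.trans (le_antisymm ha h1) (le_antisymm h2 hb))
  · -- y < t
    rcases H3 with ⟨ha, hb⟩ | ⟨ha, hb⟩
    · rcases H1.1 with h | h
      · exact absurd (lt_of_le_of_lt h (lt_trans ha hts)) (lt_irrefl s)
      · exact absurd (lt_of_le_of_lt h (lt_trans hb hts)) (lt_irrefl s)
    · rcases H1.1 with h | h
      · exact absurd (lt_of_le_of_lt (le_trans h ha) (lt_trans hty hts)) (lt_irrefl s)
      · exact absurd (lt_of_le_of_lt (le_trans h hb) (lt_trans hty hts)) (lt_irrefl s)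

end AuxKey
section AuxKey2

variable {A : Type*} [DecidableEq A]

lemma key_C3a (L : Ballot A) (s t b y : A)
    (hbs : b ≠ s) (hys : y ≠ s)
    (hts : L.lt t s) (hadj : ∀ z, ¬ (L.lt t z ∧ L.lt z s))
    (H1 : L.le y s ∨ L.le y b)
    (H2 : (L.le s s ∧ L.le s b) ∨ (L.le y s ∧ L.le y b))
    (H3 : ((swapBallot L s t).le s s ∧ (swapBallot L s t).le b s) ∨
          ((swapBallot L s t).le s y ∧ (swapBallot L s t).le b y))
    (H4 : (swapBallot L s t).le s y ∨ (swapBallot L s t).le b y) : y = b := by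
  letI := L
  by_contra hyb
  rw [swap_le_s_iff hts hadj hbs, swap_s_le_iff hts hadj hys,
    swap_le_iff hts hadj hbs hys] at H3
  rw [swap_s_le_iff hts hadj hys, swap_le_iff hts hadj hbs hys] at H4
  rcases le_or_gt s b with hsb | hbs'
  · -- s < b
    have hsb' : s < b := lt_of_le_of_ne hsb (Ne.symm hbs)
    have hyb' : y < b := by
      rcases H1 with h | h
      · exact lt_of_le_of_lt h hsb'
      · exact lt_of_le_of_ne h hyb
    rcases H3 with ⟨_, h⟩ | ⟨_, h⟩
    · exact absurd (lt_trans (lt_trans h hts) hsb') (lt_irrefl b)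
    · exact absurd (lt_of_le_of_lt h hyb') (lt_irrefl b)
  · -- b < s
    rcases H2 with ⟨_, h⟩ | ⟨h1, h2⟩
    · exact absurd (lt_of_le_of_lt h hbs') (lt_irrefl s)
    · have hyb' : y < b := lt_of_le_of_ne h2 hyb
      rcases H4 with h | h
      · -- t ≤ y
        rcases eq_or_ne y t with hyt | hyt
        · exact hadj b ⟨hyt ▸ hyb', hbs'⟩
        · exact hadj y ⟨lt_of_le_of_ne h (Ne.symm hyt), lt_of_le_of_ne h1 hys⟩
      · exact absurd (lt_of_le_of_lt h hyb') (lt_irrefl b)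

end AuxKey2
section AuxKey3

variable {A : Type*} [DecidableEq A]

lemma key_C3b (L : Ballot A) (s t b x y : A)
    (hbs : b ≠ s) (hxs : x ≠ s) (hys : y ≠ s) (hxy : x ≠ y)
    (hts : L.lt t s) (hadj : ∀ z, ¬ (L.lt t z ∧ L.lt z s))
    (H1 : (L.le x s ∨ L.le x b) ∧ (L.le y s ∨ L.le y b))
    (H2 : (L.le x s ∧ L.le x b) ∨ (L.le y s ∧ L.le y b))
    (H3 : ((swapBallot L s t).le s x ∧ (swapBallot L s t).le b x) ∨
          ((swapBallot L s t).le s y ∧ (swapBallot L s t).le b y))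
    (H4 : ((swapBallot L s t).le s x ∨ (swapBallot L s t).le b x) ∧
          ((swapBallot L s t).le s y ∨ (swapBallot L s t).le b y)) :
    ({x, y} : Finset A) = {t, b} := by
  letI := L
  rw [swap_s_le_iff hts hadj hxs, swap_le_iff hts hadj hbs hxs,
    swap_s_le_iff hts hadj hys, swap_le_iff hts hadj hbs hys] at H3 H4
  -- H3 : (t ≤ x ∧ b ≤ x) ∨ (t ≤ y ∧ b ≤ y) ; H4 : (t ≤ x ∨ b ≤ x) ∧ (t ≤ y ∨ b ≤ y)
  rcases eq_or_ne b t with hbt | hbt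
  · -- b = t : impossible
    exfalso
    subst hbt
    have hbx : b ≤ x := H4.1.elim id id
    have hby : b ≤ y := H4.2.elim id id
    rcases H2 with ⟨h1, h2⟩ | ⟨h1, h2⟩
    · have hxb : x = b := le_antisymm h2 hbx
      have hby' : b < y := lt_of_le_of_ne hby (fun e => hxy (hxb.trans e))
      rcases H1.2 with h | h
      · exact hadj y ⟨hby', lt_of_le_of_ne h hys⟩
      · exact hxy (hxb.trans (le_antisymm hby h))
    · have hyb : y = b := le_antisymm h2 hby
      have hbx' : b < x := lt_of_le_of_ne hbx (fun e => hxy (e ▸ hyb.symm : x = y))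
      rcases H1.1 with h | h
      · exact hadj x ⟨hbx', lt_of_le_of_ne h hxs⟩
      · exact hxy ((le_antisymm h hbx).trans hyb.symm)
  · rcases le_or_gt s b with hsb | hbs'
    · -- s < b
      have hsb' : s < b := lt_of_le_of_ne hsb (Ne.symm hbs)
      have hxb : x ≤ b := H1.1.elim (fun h => le_trans h (le_of_lt hsb')) id
      have hyb : y ≤ b := H1.2.elim (fun h => le_trans h (le_of_lt hsb')) id
      rcases H3 with ⟨htx, hbx⟩ | ⟨hty, hby⟩
      · -- x = b, y = t
        have hxb' : x = b := le_antisymm hxb hbx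
        have hty' : t ≤ y := by
          rcases H4.2 with h | h
          · exact h
          · exact absurd (hxb'.trans (le_antisymm hyb h).symm) hxy
        have hyt : y = t := by
          rcases H2 with ⟨h1, _⟩ | ⟨h1, _⟩
          · exact absurd (lt_of_le_of_lt (hxb' ▸ h1 : b ≤ s) hsb') (lt_irrefl b)
          · rcases eq_or_lt_of_le hty' with h' | h'
            · exact h'.symm
            · exact absurd ⟨h', lt_of_le_of_ne h1 hys⟩ (hadj y)
        rw [hxb', hyt, Finset.pair_comm]
      · -- y = b, x = t
        have hyb' : y = b := le_antisymm hyb hby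
        have htx' : t ≤ x := by
          rcases H4.1 with h | h
          · exact h
          · exact absurd ((le_antisymm hxb h).trans hyb'.symm) hxy
        have hxt : x = t := by
          rcases H2 with ⟨h1, _⟩ | ⟨h1, _⟩
          · rcases eq_or_lt_of_le htx' with h' | h'
            · exact h'.symm
            · exact absurd ⟨h', lt_of_le_of_ne h1 hxs⟩ (hadj x)
          · exact absurd (lt_of_le_of_lt (hyb' ▸ h1 : b ≤ s) hsb') (lt_irrefl b)
        rw [hxt, hyb']
    · -- b < s, hence b < t
      have hbt' : b < t := by
        rcases le_or_gt t b with h | h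
        · exact absurd ⟨lt_of_le_of_ne h (Ne.symm hbt), hbs'⟩ (hadj b)
        · exact h
      rcases H2 with ⟨h1, h2⟩ | ⟨h1, h2⟩
      · -- x = b, y = t
        have hxb' : x = b := by
          rcases H4.1 with h | h
          · exact absurd (lt_of_le_of_lt (le_trans h h2) hbt') (lt_irrefl t)
          · exact le_antisymm h2 h
        rcases H3 with ⟨htx, _⟩ | ⟨hty, hby⟩
        · exact absurd (lt_of_le_of_lt (hxb' ▸ htx : t ≤ b) hbt') (lt_irrefl t)
        · have hyt : y = t := by
            rcases H1.2 with h | h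
            · rcases eq_or_lt_of_le hty with h' | h'
              · exact h'.symm
              · exact absurd ⟨h', lt_of_le_of_ne h hys⟩ (hadj y)
            · exact absurd (hxb'.trans (le_antisymm h hby).symm) hxy
          rw [hxb', hyt, Finset.pair_comm]
      · -- y = b, x = t
        have hyb' : y = b := by
          rcases H4.2 with h | h
          · exact absurd (lt_of_le_of_lt (le_trans h h2) hbt') (lt_irrefl t)
          · exact le_antisymm h2 h
        rcases H3 with ⟨htx, hbx⟩ | ⟨hty, _⟩
        · have hxt : x = t := by
            rcases H1.1 with h | h
            · rcases eq_or_lt_of_le htx with h' | h'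
              · exact h'.symm
              · exact absurd ⟨h', lt_of_le_of_ne h hxs⟩ (hadj x)
            · exact absurd ((le_antisymm h hbx).trans hyb'.symm) hxy
          rw [hxt, hyb']
        · exact absurd (lt_of_le_of_lt (hyb' ▸ hty : t ≤ b) hbt') (lt_irrefl t)

end AuxKey3
section AuxKeyMain

variable {A : Type*} [DecidableEq A]

lemma key (L : Ballot A) (s t a b x y : A) (hab : a ≠ b) (hxy : x ≠ y)
    (hts : L.lt t s) (hadj : ∀ z, ¬ (L.lt t z ∧ L.lt z s))
    (H1 : (L.le x a ∨ L.le x b) ∧ (L.le y a ∨ L.le y b))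
    (H2 : (L.le x a ∧ L.le x b) ∨ (L.le y a ∧ L.le y b))
    (H3 : ((swapBallot L s t).le a x ∧ (swapBallot L s t).le b x) ∨
          ((swapBallot L s t).le a y ∧ (swapBallot L s t).le b y))
    (H4 : ((swapBallot L s t).le a x ∨ (swapBallot L s t).le b x) ∧
          ((swapBallot L s t).le a y ∨ (swapBallot L s t).le b y)) :
    ({x, y} : Finset A) = {a, b} ∨
      (s = a ∧ ({x, y} : Finset A) = {t, b}) ∨
      (s = b ∧ ({x, y} : Finset A) = {t, a}) := by
  by_cases hsa : s = a
  · subst hsa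
    have hbs : b ≠ s := fun h => hab h.symm
    rcases eq_or_ne x s with hxs | hxs
    · subst hxs
      have hys : y ≠ x := fun h => hxy h.symm
      have hyb : y = b := key_C3a L x t b y hbs hys hts hadj H1.2 H2 H3 H4.2
      exact Or.inl (by rw [hyb])
    · rcases eq_or_ne y s with hys | hys
      · subst hys
        have hxb : x = b := key_C3a L y t b x hbs hxs hts hadj H1.1 H2.symm H3.symm H4.1
        exact Or.inl (by rw [hxb, Finset.pair_comm])
      · exact Or.inr (Or.inl ⟨rfl, key_C3b L s t b x y hbs hxs hys hxy hts hadj H1 H2 H3 H4⟩)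
  · by_cases hsb : s = b
    · subst hsb
      have has : a ≠ s := fun h => hsa h.symm
      have H1' : (L.le x s ∨ L.le x a) ∧ (L.le y s ∨ L.le y a) := ⟨H1.1.symm, H1.2.symm⟩
      have H2' : (L.le x s ∧ L.le x a) ∨ (L.le y s ∧ L.le y a) :=
        H2.imp (fun h => ⟨h.2, h.1⟩) (fun h => ⟨h.2, h.1⟩)
      have H3' : ((swapBallot L s t).le s x ∧ (swapBallot L s t).le a x) ∨
          ((swapBallot L s t).le s y ∧ (swapBallot L s t).le a y) :=
        H3.imp (fun h => ⟨h.2, h.1⟩) (fun h => ⟨h.2, h.1⟩)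
      have H4' : ((swapBallot L s t).le s x ∨ (swapBallot L s t).le a x) ∧
          ((swapBallot L s t).le s y ∨ (swapBallot L s t).le a y) := ⟨H4.1.symm, H4.2.symm⟩
      rcases eq_or_ne x s with hxs | hxs
      · subst hxs
        have hys : y ≠ x := fun h => hxy h.symm
        have hya : y = a := key_C3a L x t a y has hys hts hadj H1'.2 H2' H3' H4'.2
        exact Or.inl (by rw [hya, Finset.pair_comm])
      · rcases eq_or_ne y s with hys | hys
        · subst hys
          have hxa : x = a := key_C3a L y t a x has hxs hts hadj H1'.1 H2'.symm H3'.symm H4'.1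
          exact Or.inl (by rw [hxa])
        · exact Or.inr (Or.inr ⟨rfl,
            key_C3b L s t a x y has hxs hys hxy hts hadj H1' H2' H3' H4'⟩)
    · -- s ∉ {a, b}
      have has : a ≠ s := fun h => hsa h.symm
      have hbs : b ≠ s := fun h => hsb h.symm
      rcases eq_or_ne x s with hxs | hxs
      · subst hxs
        have hys : y ≠ x := fun h => hxy h.symm
        exact absurd (key_C2 L x t a b y hab has hbs hys hts hadj H1 H2 H3 H4) id
      · rcases eq_or_ne y s with hys | hys
        · subst hys
          exact absurd (key_C2 L y t a b x hab has hbs hxs hts hadj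
            ⟨H1.2, H1.1⟩ H2.symm H3.symm ⟨H4.2, H4.1⟩) id
        · refine Or.inl (key_C1 L a b x y H1 H2 ?_ ?_)
          · rw [swap_le_iff hts hadj has hxs, swap_le_iff hts hadj hbs hxs,
              swap_le_iff hts hadj has hys, swap_le_iff hts hadj hbs hys] at H3
            exact H3
          · rw [swap_le_iff hts hadj has hxs, swap_le_iff hts hadj hbs hxs,
              swap_le_iff hts hadj has hys, swap_le_iff hts hadj hbs hys] at H4
            exact H4

end AuxKeyMain
section AuxMD

variable {A : Type*}

lemma eq_of_movedDown_empty {L L' : Ballot A} {s : A} (hmd : MovedDown L L' s)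
    (h : ∀ x, ¬ (L.lt x s ∧ L'.lt s x)) : L' = L := by
  have hlt : ∀ u v, L'.lt u v ↔ L.lt u v := by
    intro u v
    rcases eq_or_ne s u with rfl | hu
    · rcases eq_or_ne s v with rfl | hv
      · constructor
        · intro hh; exact absurd hh (@lt_irrefl A L'.toPartialOrder.toPreorder s)
        · intro hh; exact absurd hh (@lt_irrefl A L.toPartialOrder.toPreorder s)
      · constructor
        · intro hh
          rcases @lt_trichotomy A L s v with h1 | h1 | h1
          · exact h1
          · exact absurd h1.symm hv.symm
          · exact absurd ⟨h1, hh⟩ (h v)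
        · exact hmd.2 v
    · rcases eq_or_ne s v with rfl | hv
      · constructor
        · intro hh
          rcases @lt_trichotomy A L u s with h1 | h1 | h1
          · exact h1
          · exact absurd h1 hu.symm
          · exact absurd hh (@lt_asymm A L'.toPartialOrder.toPreorder _ _ (hmd.2 u h1))
        · intro hh
          rcases @lt_trichotomy A L' u s with h1 | h1 | h1
          · exact h1
          · exact absurd h1 hu.symm
          · exact absurd ⟨hh, h1⟩ (h u)
      · exact hmd.1 u v hu.symm hv.symm
  apply LinearOrder.ext
  intro u v
  rw [← @not_lt A L v u, ← @not_lt A L' v u, hlt v u]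

lemma blt_irrefl (B : Ballot A) (u : A) : ¬ B.lt u u :=
  @lt_irrefl A B.toPartialOrder.toPreorder u

lemma blt_trans (B : Ballot A) {u v w : A} : B.lt u v → B.lt v w → B.lt u w :=
  @lt_trans A B.toPartialOrder.toPreorder u v w

lemma blt_of_le_of_lt (B : Ballot A) {u v w : A} : B.le u v → B.lt v w → B.lt u w :=
  @lt_of_le_of_lt A B.toPartialOrder.toPreorder u v w

lemma blt_of_le_of_ne (B : Ballot A) {u v : A} : B.le u v → u ≠ v → B.lt u v :=
  @lt_of_le_of_ne A B.toPartialOrder u v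

lemma bne_of_lt (B : Ballot A) {u v : A} (h : B.lt u v) : u ≠ v :=
  fun e => absurd h (e ▸ blt_irrefl B v)

lemma pair_card_ne {a b : A} [DecidableEq A] (h : ({a, b} : Finset A).card = 2) : a ≠ b := by
  intro e; subst e; simp at h

end AuxMD
section AuxMain

variable {V A : Type*} [Fintype V] [DecidableEq V] [Fintype A] [DecidableEq A] [Nonempty A]

lemma down_aux (F : Profile V A → Finset A) (hcomm : ∀ P, (F P).card = 2)
    (hSPP : SPP F) (hSPO : SPO F) :
    ∀ (n : ℕ) (P : Profile V A) (i : V) (a b s : A) (L' : Ballot A),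
      F P = {a, b} → MovedDown (P i) L' s →
      {z | (P i).lt z s ∧ L'.lt s z}.ncard ≤ n →
      (F (Function.update P i L') = F P ∨
        ∃ c, c ≠ s ∧ (P i).lt c s ∧ L'.lt s c ∧
          ((s = a ∧ F (Function.update P i L') = {c, b}) ∨
           (s = b ∧ F (Function.update P i L') = {c, a}))) := by
  intro n
  induction n with
  | zero =>
    intro P i a b s L' hFP hmd hcard
    left
    have hD : {z | (P i).lt z s ∧ L'.lt s z} = ∅ :=
      (Set.ncard_eq_zero (Set.toFinite _)).1 (Nat.le_zero.1 hcard)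
    have h := Set.eq_empty_iff_forall_notMem.1 hD
    have heq := eq_of_movedDown_empty hmd h
    rw [heq, Function.update_eq_self]
  | succ n ih =>
    intro P i a b s L' hFP hmd hcard
    classical
    by_cases hD : {z | (P i).lt z s ∧ L'.lt s z} = ∅
    · left
      have h := Set.eq_empty_iff_forall_notMem.1 hD
      have heq := eq_of_movedDown_empty hmd h
      rw [heq, Function.update_eq_self]
    · obtain ⟨d, hd⟩ := Set.nonempty_iff_ne_empty.2 hD
      have hd1 : (P i).lt d s := hd.1
      have hd2 : L'.lt s d := hd.2
      -- the element immediately below s in P i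
      have hTne : (Finset.univ.filter (fun z => (P i).lt z s)).Nonempty :=
        ⟨d, by simp [hd1]⟩
      set t := @Finset.max' A (P i) _ hTne with hT
      have hts : (P i).lt t s :=
        (Finset.mem_filter.1 (@Finset.max'_mem A (P i) _ hTne)).2
      have hadj : ∀ z, ¬ ((P i).lt t z ∧ (P i).lt z s) := by
        rintro z ⟨h1, h2⟩
        have hz : z ∈ Finset.univ.filter (fun z => (P i).lt z s) :=
          Finset.mem_filter.2 ⟨Finset.mem_univ _, h2⟩
        have hle : (P i).le z t := @Finset.le_max' A (P i) _ z hz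
        exact absurd (blt_of_le_of_lt (P i) hle h1) (blt_irrefl (P i) z)
      have hst' : L'.lt s t := by
        rcases eq_or_ne d t with rfl | hdt
        · exact hd2
        · have hdz : d ∈ Finset.univ.filter (fun z => (P i).lt z s) :=
            Finset.mem_filter.2 ⟨Finset.mem_univ _, hd1⟩
          have hdle : (P i).le d t := @Finset.le_max' A (P i) _ d hdz
          have hds : d ≠ s := bne_of_lt (P i) hd1
          have hts' : t ≠ s := bne_of_lt (P i) hts
          have : L'.lt d t := (hmd.1 d t hds hts').2 (blt_of_le_of_ne (P i) hdle hdt)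
          exact blt_trans L' hd2 this
      set M := swapBallot (P i) s t with hM
      set PM := Function.update P i M with hPM
      have hPMi : PM i = M := Function.update_self i M P
      have hab : a ≠ b := pair_card_ne (hFP ▸ hcomm P)
      obtain ⟨x, y, hxy, hFPM⟩ := Finset.card_eq_two.1 (hcomm PM)
      -- the four strategy-proofness inequalities
      have H1 := hSPO P i M
      have H2 := hSPP P i M
      rw [hFP, ← hPM, hFPM] at H1 H2
      have H3 := hSPO PM i (P i)
      have H4 := hSPP PM i (P i)
      have hePM : Function.update PM i (P i) = P := by
        rw [hPM, Function.update_idem, Function.update_eq_self]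
      rw [hePM, hPMi, hFP, hFPM] at H3 H4
      have kk := key (P i) s t a b x y hab hxy hts hadj (H1of (P i) H1) (H2of (P i) H2)
        (H3of M H3) (H4of M H4)
      -- M moved down from P i, and L' moved down from M
      have hmdM : MovedDown M L' s := by
        constructor
        · intro u v hu hv
          exact (hmd.1 u v hu hv).trans (swap_lt_iff hts hadj hu hv).symm
        · intro u hu
          have hus : u ≠ s := (bne_of_lt M hu).symm
          have htu : (P i).le t u := (swap_s_lt_iff hts hadj hus).1 hu
          rcases eq_or_ne u t with rfl | hut
          · exact hst'
          · have h1 : (P i).lt t u := blt_of_le_of_ne (P i) htu (Ne.symm hut)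
            have h2 : (P i).lt s u := by
              rcases @lt_trichotomy A (P i) s u with h2 | h2 | h2
              · exact h2
              · exact absurd h2.symm hus
              · exact absurd ⟨h1, h2⟩ (hadj u)
            exact hmd.2 u h2
      have hcard' : {z | M.lt z s ∧ L'.lt s z}.ncard ≤ n := by
        have hsub : {z | M.lt z s ∧ L'.lt s z} ⊆ {z | (P i).lt z s ∧ L'.lt s z} \ {t} := by
          rintro z ⟨hz1, hz2⟩
          have hzs : z ≠ s := bne_of_lt M hz1
          have hzt : (P i).lt z t := (swap_lt_s_iff hts hadj hzs).1 hz1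
          exact ⟨⟨blt_trans (P i) hzt hts, hz2⟩, bne_of_lt (P i) hzt⟩
        have h1 := Set.ncard_le_ncard hsub (Set.toFinite _)
        have h2 := Set.ncard_diff_singleton_lt_of_mem
          (show t ∈ {z | (P i).lt z s ∧ L'.lt s z} from ⟨hts, hst'⟩) (Set.toFinite _)
        omega
      have hmdM' : MovedDown (PM i) L' s := by rw [hPMi]; exact hmdM
      have hcard'' : {z | (PM i).lt z s ∧ L'.lt s z}.ncard ≤ n := by rw [hPMi]; exact hcard'
      have hup : Function.update PM i L' = Function.update P i L' := by
        rw [hPM, Function.update_idem]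
      have hc_of_M : ∀ c, c ≠ s → (PM i).lt c s → (P i).lt c s := by
        intro c hc h
        rw [hPMi] at h
        exact blt_trans (P i) ((swap_lt_s_iff hts hadj hc).1 h) hts
      rcases kk with hk | ⟨hsa, hk⟩ | ⟨hsb, hk⟩
      · -- outcome at PM is still {a, b}
        have res := ih PM i a b s L' (hFPM.trans hk) hmdM' hcard''
        rcases res with h | ⟨c, hc1, hc2, hc3, hc4⟩
        · left
          rw [hup] at h
          exact h.trans ((hFPM.trans hk).trans hFP.symm)
        · right
          refine ⟨c, hc1, hc_of_M c hc1 hc2, hc3, ?_⟩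
          rw [hup] at hc4
          exact hc4
      · -- s = a and outcome at PM is {t, b}
        have hst : s ≠ t := (bne_of_lt (P i) hts).symm
        have hsb : s ≠ b := fun e => hab (hsa.symm.trans e)
        have res := ih PM i t b s L' (hFPM.trans hk) hmdM' hcard''
        rcases res with h | ⟨c, hc1, hc2, hc3, hc4⟩
        · right
          rw [hup] at h
          exact ⟨t, fun e => hst e.symm, hts, hst',
            Or.inl ⟨hsa, h.trans (hFPM.trans hk)⟩⟩
        · rcases hc4 with ⟨he, _⟩ | ⟨he, _⟩
          · exact absurd he hst
          · exact absurd he hsb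
      · -- s = b and outcome at PM is {t, a}
        have hst : s ≠ t := (bne_of_lt (P i) hts).symm
        have hsa : s ≠ a := fun e => hab (e.symm.trans hsb)
        have res := ih PM i t a s L' (hFPM.trans hk) hmdM' hcard''
        rcases res with h | ⟨c, hc1, hc2, hc3, hc4⟩
        · right
          rw [hup] at h
          exact ⟨t, fun e => hst e.symm, hts, hst',
            Or.inr ⟨hsb, h.trans (hFPM.trans hk)⟩⟩
        · rcases hc4 with ⟨he, _⟩ | ⟨he, _⟩
          · exact absurd he hst
          · exact absurd he hsa

end AuxMain
/-- Downwards monotonicity. -/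
theorem statement_4 {V A : Type*} [Fintype V] [Nonempty V] [DecidableEq V] [Fintype A] [DecidableEq A] [Nonempty A]
    (F : Profile V A → Finset A) (hcomm : ∀ P, (F P).card = 2)
    (hSPP : SPP F) (hSPO : SPO F)
    (P : Profile V A) (i : V) (a b : A) (hab : F P = {a, b})
    (s : A) (Pi' : Ballot A) (hdown : MovedDown (P i) Pi' s) :
    (s ≠ a → s ≠ b → F (Function.update P i Pi') = F P) ∧
    (s = a →
      (F (Function.update P i Pi') = F P ∨
        ∃ c : A, c ≠ s ∧ F (Function.update P i Pi') = {c, b} ∧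
          (P i).lt c s ∧ Pi'.lt s c)) := by
  have hab' : a ≠ b := pair_card_ne (hab ▸ hcomm P)
  have res := down_aux F hcomm hSPP hSPO {z | (P i).lt z s ∧ Pi'.lt s z}.ncard
    P i a b s Pi' hab hdown le_rfl
  constructor
  · intro hsa hsb
    rcases res with h | ⟨c, _, _, _, hc⟩
    · exact h
    · rcases hc with ⟨he, _⟩ | ⟨he, _⟩
      · exact absurd he hsa
      · exact absurd he hsb
  · intro hsa
    rcases res with h | ⟨c, hc1, hc2, hc3, hc4⟩
    · exact Or.inl h
    · rcases hc4 with ⟨_, hF⟩ | ⟨he, _⟩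
      · exact Or.inr ⟨c, hc1, hF, hc2, hc3⟩
      · exact absurd (hsa.symm.trans he) hab'
end

section
/- Let F be a consular election rule that is reducible to social choice functions G and H, i.e., A = B ⊎ C with B, C nonempty and F(P) = {G(P|B), H(P|C)} for all profiles P. Then F satisfies SPP and SPO if and only if both G and H are strategy-proof social choice functions. -/
open Function

variable {V A : Type*}

-- AUX START
section MyAux
variable {V A : Type*}

lemma restrictBallot_le' (L : Ballot A) (B : Finset A) (x y : {x // x ∈ B}) :
    (restrictBallot L B).le x y ↔ L.le x.val y.val := Iff.rfl

lemma update_restrict [DecidableEq V] (P : Profile V A) (i : V) (Pi' : Ballot A) (B : Finset A) :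
    (fun j => restrictBallot (Function.update P i Pi' j) B)
      = Function.update (fun j => restrictBallot (P j) B) i (restrictBallot Pi' B) := by
  funext j
  rcases eq_or_ne j i with rfl | h
  · simp
  · simp [Function.update_of_ne h]

lemma bestIn_pair [Nonempty A] [DecidableEq A] (L : Ballot A) {a b : A} (h : L.le b a) :
    bestIn L {a, b} = a := by
  letI := L
  have hne : ({a, b} : Finset A).Nonempty := ⟨a, by simp⟩
  rw [bestIn, dif_pos hne]
  apply le_antisymm
  · apply Finset.max'_le
    intro y hy
    rcases Finset.mem_insert.mp hy with rfl | hy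
    · exact le_rfl
    · rw [Finset.mem_singleton.mp hy]; exact h
  · exact Finset.le_max' _ _ (by simp)

lemma bestIn_mono [Nonempty A] [DecidableEq A] (L : Ballot A) {a b a' b' : A}
    (ha : L.le a' a) (hb : L.le b' b) :
    L.le (bestIn L {a', b'}) (bestIn L {a, b}) := by
  letI := L
  have hne : ({a', b'} : Finset A).Nonempty := ⟨a', by simp⟩
  have hne2 : ({a, b} : Finset A).Nonempty := ⟨a, by simp⟩
  rw [bestIn, dif_pos hne, bestIn, dif_pos hne2]
  have hmem := Finset.max'_mem ({a', b'} : Finset A) hne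
  rcases Finset.mem_insert.mp hmem with h | h
  · rw [h]; exact le_trans ha (Finset.le_max' _ _ (by simp))
  · rw [Finset.mem_singleton.mp h]; exact le_trans hb (Finset.le_max' _ _ (by simp))

lemma worstIn_mono [Nonempty A] [DecidableEq A] (L : Ballot A) {a b a' b' : A}
    (ha : L.le a' a) (hb : L.le b' b) :
    L.le (worstIn L {a', b'}) (worstIn L {a, b}) := by
  letI := L
  have hne : ({a', b'} : Finset A).Nonempty := ⟨a', by simp⟩
  have hne2 : ({a, b} : Finset A).Nonempty := ⟨a, by simp⟩
  rw [worstIn, worstIn, dif_pos hne, dif_pos hne2]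
  have hmem := Finset.min'_mem ({a, b} : Finset A) hne2
  rcases Finset.mem_insert.mp hmem with h | h
  · rw [h]; exact le_trans (Finset.min'_le _ _ (by simp)) ha
  · rw [Finset.mem_singleton.mp h]; exact le_trans (Finset.min'_le _ _ (by simp)) hb

variable [DecidableEq A]

/-- map sending `B` elements high (right) and the rest (in `C`) low (left) -/
noncomputable def sumMap [Fintype A] (B C : Finset A) (hu : B ∪ C = Finset.univ) :
    A → Lex ({x // x ∈ C} ⊕ {x // x ∈ B}) := fun a =>
  if h : a ∈ B then toLex (Sum.inr ⟨a, h⟩)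
  else toLex (Sum.inl ⟨a, by
    have := Finset.mem_union.mp (by rw [hu]; exact Finset.mem_univ a)
    tauto⟩)

lemma sumMap_inj [Fintype A] (B C : Finset A) (hu : B ∪ C = Finset.univ) :
    Function.Injective (sumMap B C hu) := by
  have key : ∀ a, Sum.elim Subtype.val Subtype.val (ofLex (sumMap B C hu a)) = a := by
    intro a; rw [sumMap]; split <;> rfl
  exact Function.LeftInverse.injective key

/-- extension of ballots on `B` and `C` to a ballot on `A` with all of `B` above all of `C` -/
noncomputable def extB [Fintype A] (B C : Finset A) (hu : B ∪ C = Finset.univ)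
    (LB : Ballot {x // x ∈ B}) (LC : Ballot {x // x ∈ C}) : Ballot A :=
  letI := LB; letI := LC
  LinearOrder.lift' (sumMap B C hu) (sumMap_inj B C hu)

lemma extB_lt [Fintype A] (B C : Finset A) (hu : B ∪ C = Finset.univ)
    (hdisj : Disjoint B C)
    (LB : Ballot {x // x ∈ B}) (LC : Ballot {x // x ∈ C}) {g h : A}
    (hg : g ∈ B) (hh : h ∈ C) : (extB B C hu LB LC).lt h g := by
  have hh' : h ∉ B := fun hb => (Finset.disjoint_left.mp hdisj hb) hh
  show (letI := LB; letI := LC; sumMap B C hu h < sumMap B C hu g)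
  letI := LB; letI := LC
  rw [sumMap, sumMap, dif_neg hh', dif_pos hg]
  exact Sum.Lex.inl_lt_inr _ _

lemma restrict_extB [Fintype A] (B C : Finset A) (hu : B ∪ C = Finset.univ)
    (LB : Ballot {x // x ∈ B}) (LC : Ballot {x // x ∈ C}) :
    restrictBallot (extB B C hu LB LC) B = LB := by
  apply LinearOrder.ext
  intro x y
  show (extB B C hu LB LC).le x.val y.val ↔ LB.le x y
  show (letI := LB; letI := LC; sumMap B C hu x.val ≤ sumMap B C hu y.val) ↔ _
  letI := LB; letI := LC
  rw [sumMap, sumMap, dif_pos x.prop, dif_pos y.prop]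
  rw [Sum.Lex.inr_le_inr_iff]

lemma restrict_extB_C [Fintype A] (B C : Finset A) (hu : B ∪ C = Finset.univ)
    (hdisj : Disjoint B C)
    (LB : Ballot {x // x ∈ B}) (LC : Ballot {x // x ∈ C}) :
    restrictBallot (extB B C hu LB LC) C = LC := by
  apply LinearOrder.ext
  intro x y
  show (extB B C hu LB LC).le x.val y.val ↔ LC.le x y
  show (letI := LB; letI := LC; sumMap B C hu x.val ≤ sumMap B C hu y.val) ↔ _
  letI := LB; letI := LC
  have hx : x.val ∉ B := fun hb => (Finset.disjoint_left.mp hdisj hb) x.prop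
  have hy : y.val ∉ B := fun hb => (Finset.disjoint_left.mp hdisj hb) y.prop
  rw [sumMap, sumMap, dif_neg hx, dif_neg hy]
  rw [Sum.Lex.inl_le_inl_iff]

end MyAux

lemma extB_le {A : Type*} [DecidableEq A] [Fintype A] (B C : Finset A) (hu : B ∪ C = Finset.univ)
    (hdisj : Disjoint B C)
    (LB : Ballot {x // x ∈ B}) (LC : Ballot {x // x ∈ C}) {g h : A}
    (hg : g ∈ B) (hh : h ∈ C) : (extB B C hu LB LC).le h g := by
  letI := extB B C hu LB LC
  exact le_of_lt (extB_lt B C hu hdisj LB LC hg hh)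


/-- a consular rule reducible to social choice functions `G` and `H`
satisfies SPP and SPO iff both `G` and `H` are strategy-proof. -/
theorem statement_9 {V A : Type*} [Fintype V] [Nonempty V] [DecidableEq V] [Fintype A] [DecidableEq A] [Nonempty A]
    (F : Profile V A → Finset A) (hcomm : ∀ P, (F P).card = 2)
    (B C : Finset A) (hB : B.Nonempty) (hC : C.Nonempty)
    (hdisj : Disjoint B C) (hunion : B ∪ C = Finset.univ)
    (G : Profile V {x // x ∈ B} → {x // x ∈ B})
    (H : Profile V {x // x ∈ C} → {x // x ∈ C})
    (hred : ∀ P : Profile V A,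
      F P = {((G (fun i => restrictBallot (P i) B)) : A),
             ((H (fun i => restrictBallot (P i) C)) : A)}) :
    (SPP F ∧ SPO F) ↔ (SCFStrategyProof G ∧ SCFStrategyProof H) := by
  constructor
  · rintro ⟨-, hSPO⟩
    have hu2 : C ∪ B = Finset.univ := by rw [Finset.union_comm]; exact hunion
    have L0 : Ballot A := LinearOrder.lift' (Fintype.equivFin A) (Fintype.equivFin A).injective
    constructor
    · -- G is strategy-proof
      intro Q i Qi'
      set LC0 : Ballot {x // x ∈ C} := restrictBallot L0 C with hLC0
      set P : Profile V A := fun j => extB B C hunion (Q j) LC0 with hP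
      set Pi' : Ballot A := extB B C hunion Qi' LC0 with hPi'
      have hQB : (fun j => restrictBallot (P j) B) = Q := by
        funext j; exact restrict_extB B C hunion (Q j) LC0
      have hRB : (fun j => restrictBallot (Function.update P i Pi' j) B)
          = Function.update Q i Qi' := by
        rw [update_restrict, hQB, hPi', restrict_extB]
      have hRC : (fun j => restrictBallot (Function.update P i Pi' j) C)
          = (fun j => restrictBallot (P j) C) := by
        funext j
        rcases eq_or_ne j i with rfl | hji
        · simp only [Function.update_self, hPi', hP,
            restrict_extB_C B C hunion hdisj]
        · simp only [Function.update_of_ne hji]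
      have key := hSPO P i Pi'
      rw [hred (Function.update P i Pi'), hred P, hRB, hRC, hQB] at key
      set g : {x // x ∈ B} := G Q with hg
      set g' : {x // x ∈ B} := G (Function.update Q i Qi') with hg'
      set h : {x // x ∈ C} := H (fun j => restrictBallot (P j) C) with hh
      have h1 : bestIn (P i) {(g' : A), (h : A)} = (g' : A) :=
        bestIn_pair (P i) (extB_le B C hunion hdisj (Q i) LC0 g'.prop h.prop)
      have h2 : bestIn (P i) {(g : A), (h : A)} = (g : A) :=
        bestIn_pair (P i) (extB_le B C hunion hdisj (Q i) LC0 g.prop h.prop)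
      rw [h1, h2] at key
      have hQi : restrictBallot (P i) B = Q i := congrFun hQB i
      rw [← hQi]
      exact key
    · -- H is strategy-proof
      intro Q i Qi'
      set LB0 : Ballot {x // x ∈ B} := restrictBallot L0 B with hLB0
      set P : Profile V A := fun j => extB C B hu2 (Q j) LB0 with hP
      set Pi' : Ballot A := extB C B hu2 Qi' LB0 with hPi'
      have hQC : (fun j => restrictBallot (P j) C) = Q := by
        funext j; exact restrict_extB C B hu2 (Q j) LB0
      have hRC : (fun j => restrictBallot (Function.update P i Pi' j) C)
          = Function.update Q i Qi' := by
        rw [update_restrict, hQC, hPi', restrict_extB]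
      have hRB : (fun j => restrictBallot (Function.update P i Pi' j) B)
          = (fun j => restrictBallot (P j) B) := by
        funext j
        rcases eq_or_ne j i with rfl | hji
        · simp only [Function.update_self, hPi', hP,
            restrict_extB_C C B hu2 hdisj.symm]
        · simp only [Function.update_of_ne hji]
      have key := hSPO P i Pi'
      rw [hred (Function.update P i Pi'), hred P, hRB, hRC, hQC] at key
      set g : {x // x ∈ B} := G (fun j => restrictBallot (P j) B) with hg
      set h : {x // x ∈ C} := H Q with hh
      set h' : {x // x ∈ C} := H (Function.update Q i Qi') with hh'
      have h1 : bestIn (P i) {(g : A), (h' : A)} = (h' : A) := by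
        rw [Finset.pair_comm]
        exact bestIn_pair (P i) (extB_le C B hu2 hdisj.symm (Q i) LB0 h'.prop g.prop)
      have h2 : bestIn (P i) {(g : A), (h : A)} = (h : A) := by
        rw [Finset.pair_comm]
        exact bestIn_pair (P i) (extB_le C B hu2 hdisj.symm (Q i) LB0 h.prop g.prop)
      rw [h1, h2] at key
      have hQi : restrictBallot (P i) C = Q i := congrFun hQC i
      rw [← hQi]
      exact key
  · rintro ⟨hG, hH⟩
    constructor
    · intro P i Pi'
      have hgB := hG (fun j => restrictBallot (P j) B) i (restrictBallot Pi' B)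
      have hgC := hH (fun j => restrictBallot (P j) C) i (restrictBallot Pi' C)
      rw [hred (Function.update P i Pi'), hred P, update_restrict P i Pi' B,
        update_restrict P i Pi' C]
      exact worstIn_mono (P i) hgB hgC
    · intro P i Pi'
      have hgB := hG (fun j => restrictBallot (P j) B) i (restrictBallot Pi' B)
      have hgC := hH (fun j => restrictBallot (P j) C) i (restrictBallot Pi' C)
      rw [hred (Function.update P i Pi'), hred P, update_restrict P i Pi' B,
        update_restrict P i Pi' C]
      exact bestIn_mono (P i) hgB hgC
end
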